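/- Define f_zero : ℝ⁵ → ℝ by f_zero(x, y, p, q₁, q₂) = 45·(1−x) + 5·x + 50·y + (90·x − 45·(1−x))·p + (10·(1−x) − 5·x)·q₁ + (100·(1−y) − 50·y)·q₂. Then for all (x, y) ∈ [0,1] × [0,1], f_zero(x, y, 83/270, 1/10, 1/3) = 131/2, and for all (p, q₁, q₂) ∈ [1/10, 9/10]³, f_zero(1/3, 2/3, p, q₁, q₂) ≥ 131/2. Consequently the agent policy (x, y) = (1/3, 2/3) and the nature assignment (p, q₁, q₂) = (83/270, 1/10, 1/3) form a saddle point (Nash equilibrium) of the game with value 131/2. -/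
import Mathlib

noncomputable def fZero (x y p q₁ q₂ : ℝ) : ℝ :=
  45 * (1 - x) + 5 * x + 50 * y + (90 * x - 45 * (1 - x)) * p
    + (10 * (1 - x) - 5 * x) * q₁ + (100 * (1 - y) - 50 * y) * q₂

theorem zeroStickiness_saddle_point :
    (∀ x ∈ Set.Icc (0 : ℝ) 1, ∀ y ∈ Set.Icc (0 : ℝ) 1,
        fZero x y (83/270) (1/10) (1/3) = 131 / 2) ∧
    (∀ p ∈ Set.Icc (1/10 : ℝ) (9/10), ∀ q₁ ∈ Set.Icc (1/10 : ℝ) (9/10),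
        ∀ q₂ ∈ Set.Icc (1/10 : ℝ) (9/10),
        131 / 2 ≤ fZero (1/3) (2/3) p q₁ q₂) ∧
    -- saddle point (Nash equilibrium) with value 131/2:
    fZero (1/3) (2/3) (83/270) (1/10) (1/3) = 131 / 2 ∧
    (∀ x ∈ Set.Icc (0 : ℝ) 1, ∀ y ∈ Set.Icc (0 : ℝ) 1,
        fZero x y (83/270) (1/10) (1/3) ≤ fZero (1/3) (2/3) (83/270) (1/10) (1/3)) ∧
    (∀ p ∈ Set.Icc (1/10 : ℝ) (9/10), ∀ q₁ ∈ Set.Icc (1/10 : ℝ) (9/10),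
        ∀ q₂ ∈ Set.Icc (1/10 : ℝ) (9/10),
        fZero (1/3) (2/3) (83/270) (1/10) (1/3) ≤ fZero (1/3) (2/3) p q₁ q₂) := by
  refine ⟨fun x _ y _ => by unfold fZero; ring,
    fun p _ q₁ hq₁ q₂ _ => by unfold fZero; linarith [hq₁.1],
    by unfold fZero; ring,
    fun x _ y _ => by unfold fZero; nlinarith [],
    fun p _ q₁ hq₁ q₂ _ => by unfold fZero; linarith [hq₁.1]⟩
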